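/- arXiv:2310.17282 — 2 statements merged into one kernel-verified Lean document; each statement's English description precedes it below -/
import Mathlib

section
/- The Cartesian vertex span of the multilayered cycle MC_n^k is at most ⌊n/2⌋; that is, for any two opposite lazy l-tracks f and g on MC_n^k, min over i of d(f(i),g(i)) is at most ⌊n/2⌋. -/
/-- The multilayered cycle `MC n k` on vertex set `ZMod n × Fin k`. -/
def MC (n k : ℕ) : SimpleGraph (ZMod n × Fin k) where
  Adj u v := u ≠ v ∧ ((u.1 = v.1 ∧ (u.2.1 + 1 = v.2.1 ∨ v.2.1 + 1 = u.2.1)) ∨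
      (u.2 = v.2 ∧ (u.1 + 1 = v.1 ∨ v.1 + 1 = u.1)))
  symm := by
    constructor
    rintro u v ⟨h1, h2⟩
    refine ⟨h1.symm, ?_⟩
    rcases h2 with ⟨ha, hb⟩ | ⟨ha, hb⟩
    · exact Or.inl ⟨ha.symm, hb.symm⟩
    · exact Or.inr ⟨ha.symm, hb.symm⟩
  loopless := by constructor; rintro u ⟨h1, -⟩; exact h1 rfl

/-- A lazy `l`-track on `G`: surjective, consecutive values equal or adjacent. -/
def IsLazyTrack {V : Type*} (G : SimpleGraph V) {l : ℕ} (f : Fin l → V) : Prop :=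
  Function.Surjective f ∧
    ∀ i : Fin l, ∀ h : i.1 + 1 < l, f ⟨i.1 + 1, h⟩ = f i ∨ G.Adj (f i) (f ⟨i.1 + 1, h⟩)

/-- An `l`-track on `G`: surjective, consecutive values adjacent. -/
def IsTrack {V : Type*} (G : SimpleGraph V) {l : ℕ} (f : Fin l → V) : Prop :=
  Function.Surjective f ∧
    ∀ i : Fin l, ∀ h : i.1 + 1 < l, G.Adj (f i) (f ⟨i.1 + 1, h⟩)

/-- `f` and `g` are opposite lazy `l`-tracks: exactly one of them moves at each step. -/
def OppositeTracks {V : Type*} (G : SimpleGraph V) {l : ℕ} (f g : Fin l → V) : Prop :=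
  ∀ i : Fin l, ∀ h : i.1 + 1 < l,
    (G.Adj (f i) (f ⟨i.1 + 1, h⟩) ↔ g ⟨i.1 + 1, h⟩ = g i)

/-! The layer difference `D i = layer (f i) - layer (g i)` changes by at most one per step, because at
every step only one of the two tracks moves, and an edge of `MC n k` changes the layer by at most one.
By surjectivity `D ≤ 0` when `f` visits the bottom layer and `D ≥ 0` when `g` does, so by a
discrete intermediate value argument `f i` and `g i` lie in the same layer for some `i`.
Within a layer, `MC n k` contains the cycle `C_n`, whose diameter is `⌊n/2⌋`. -/

lemma Nat.exists_mem_Icc_eq_zero_of_abs_sub_le_one (D : ℕ → ℤ) {i j : ℕ} (hij : i ≤ j)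
    (hstep : ∀ m < j, |D (m + 1) - D m| ≤ 1) (hi : D i ≤ 0) (hj : 0 ≤ D j) :
    ∃ m ∈ Set.Icc i j, D m = 0 := by
  induction j, hij using Nat.le_induction with
  | base => exact ⟨i, ⟨le_rfl, le_rfl⟩, le_antisymm hi hj⟩
  | succ j hij ih =>
    by_cases hDj : 0 ≤ D j
    · obtain ⟨m, ⟨him, hmj⟩, hm⟩ := ih (fun m hm => hstep m (by omega)) hDj
      exact ⟨m, ⟨him, by omega⟩, hm⟩
    · have := abs_le.mp (hstep j (by omega))
      exact ⟨j + 1, ⟨by omega, le_rfl⟩, by omega⟩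

lemma Fin.exists_eq_zero_of_abs_sub_le_one {l : ℕ} (D : Fin l → ℤ)
    (hstep : ∀ (m : Fin l) (h : m.1 + 1 < l), |D ⟨m.1 + 1, h⟩ - D m| ≤ 1)
    {i j : Fin l} (hi : D i ≤ 0) (hj : 0 ≤ D j) : ∃ m, D m = 0 := by
  set E : ℕ → ℤ := fun m => if h : m < l then D ⟨m, h⟩ else 0 with hE
  have hEstep : ∀ m < l - 1, |E (m + 1) - E m| ≤ 1 := fun m hm => by
    have h : m + 1 < l := by omega
    simpa [hE, h, show m < l by omega] using hstep ⟨m, by omega⟩ h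
  have hEi : E i = D i := dif_pos i.2
  have hEj : E j = D j := dif_pos j.2
  have hEzero {m : ℕ} (hm : m < l) (h0 : E m = 0) : ∃ m : Fin l, D m = 0 :=
    ⟨⟨m, hm⟩, by simpa [hE, hm] using h0⟩
  rcases le_total i j with hij | hji
  · obtain ⟨m, ⟨-, hmj⟩, hm⟩ := Nat.exists_mem_Icc_eq_zero_of_abs_sub_le_one E hij
      (fun m hm => hEstep m (by omega)) (by rwa [hEi]) (by rwa [hEj])
    exact hEzero (by omega) hm
  · obtain ⟨m, ⟨-, hmi⟩, hm⟩ := Nat.exists_mem_Icc_eq_zero_of_abs_sub_le_one (-E) hji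
      (fun m hm => by
        rw [Pi.neg_apply, Pi.neg_apply, neg_sub_neg, abs_sub_comm]
        exact hEstep m (by omega))
      (by simpa [hEj]) (by simpa [hEi])
    exact hEzero (by omega) (neg_eq_zero.mp hm)

lemma OppositeTracks.abs_sub_sub_le_one {V : Type*} {G : SimpleGraph V} {l : ℕ}
    {f g : Fin l → V} (hop : OppositeTracks G f g) (hf : IsLazyTrack G f)
    (hg : IsLazyTrack G g) (φ : V → ℤ) (hφ : ∀ u v, G.Adj u v → |φ u - φ v| ≤ 1)
    (i : Fin l) (h : i.1 + 1 < l) :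
    |(φ (f ⟨i.1 + 1, h⟩) - φ (g ⟨i.1 + 1, h⟩)) - (φ (f i) - φ (g i))| ≤ 1 := by
  by_cases hfi : G.Adj (f i) (f ⟨i.1 + 1, h⟩)
  · rw [(hop i h).mp hfi, sub_sub_sub_cancel_right, abs_sub_comm]
    exact hφ _ _ hfi
  · have hf_stay : f ⟨i.1 + 1, h⟩ = f i := (hf.2 i h).resolve_right hfi
    have hg_move : G.Adj (g i) (g ⟨i.1 + 1, h⟩) :=
      (hg.2 i h).resolve_left (mt (hop i h).mpr hfi)
    rw [hf_stay, sub_sub_sub_cancel_left]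
    exact hφ _ _ hg_move

namespace MC

variable {n k : ℕ}

lemma abs_layer_sub_le_one_of_adj {u v : ZMod n × Fin k} (h : (MC n k).Adj u v) :
    |((u.2 : ℕ) : ℤ) - (v.2 : ℕ)| ≤ 1 := by
  rcases h.2 with ⟨-, h⟩ | ⟨h, -⟩
  · rw [abs_le]; omega
  · simp [h]

lemma dist_add_natCast_le (a : ZMod n) (b : Fin k) :
    ∀ m : ℕ, (MC n k).dist (a, b) (a + m, b) ≤ m
  | 0 => by simp
  | m + 1 => by
    set c : ZMod n := a + m
    have hc : a + ((m + 1 : ℕ) : ZMod n) = c + 1 := by push_cast; ring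
    have hstep : (MC n k).Reachable (c, b) (c + 1, b) ∧ (MC n k).dist (c, b) (c + 1, b) ≤ 1 := by
      by_cases hcc : (c, b) = (c + 1, b)
      · rw [← hcc]
        simp
      · have hadj : (MC n k).Adj (c, b) (c + 1, b) := ⟨hcc, Or.inr ⟨rfl, Or.inl rfl⟩⟩
        exact ⟨hadj.reachable, (SimpleGraph.dist_eq_one_iff_adj.mpr hadj).le⟩
    rw [hc]
    calc (MC n k).dist (a, b) (c + 1, b)
        ≤ (MC n k).dist (a, b) (c, b) + (MC n k).dist (c, b) (c + 1, b) :=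
          hstep.1.dist_triangle_right _
      _ ≤ m + 1 := add_le_add (dist_add_natCast_le a b m) hstep.2

lemma dist_add_intCast_le (a : ZMod n) (b : Fin k) (z : ℤ) :
    (MC n k).dist (a, b) (a + z, b) ≤ z.natAbs := by
  obtain ⟨m, rfl | rfl⟩ := z.eq_nat_or_neg
  · simpa using dist_add_natCast_le a b m
  · rw [SimpleGraph.dist_comm, Int.natAbs_neg, Int.natAbs_natCast]
    simpa [← sub_eq_add_neg] using dist_add_natCast_le (a - (m : ZMod n)) b m

lemma dist_le_half_of_layer_eq [NeZero n] {u v : ZMod n × Fin k} (h : u.2 = v.2) :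
    (MC n k).dist u v ≤ n / 2 := by
  obtain ⟨a, b⟩ := u
  obtain ⟨c, b'⟩ := v
  obtain rfl : b = b' := h
  have hc : a + (((c - a).valMinAbs : ℤ) : ZMod n) = c := by rw [ZMod.coe_valMinAbs]; ring
  calc (MC n k).dist (a, b) (c, b) ≤ (c - a).valMinAbs.natAbs := by
        simpa [hc] using dist_add_intCast_le a b (c - a).valMinAbs
    _ ≤ n / 2 := ZMod.natAbs_valMinAbs_le _

end MC

theorem stmt5 (n k l : ℕ) (hn : 3 ≤ n) (hk : 2 ≤ k)
    (f g : Fin l → ZMod n × Fin k)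
    (hf : IsLazyTrack (MC n k) f) (hg : IsLazyTrack (MC n k) g)
    (hop : OppositeTracks (MC n k) f g) :
    ∃ i : Fin l, (MC n k).dist (f i) (g i) ≤ n / 2 := by
  have : NeZero n := ⟨by omega⟩
  let layer : ZMod n × Fin k → ℤ := fun v => (v.2 : ℕ)
  let bottom : ZMod n × Fin k := (0, ⟨0, by omega⟩)
  obtain ⟨i, hi⟩ := hf.1 bottom
  obtain ⟨j, hj⟩ := hg.1 bottom
  obtain ⟨m, hm⟩ := Fin.exists_eq_zero_of_abs_sub_le_one (fun i => layer (f i) - layer (g i))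
    (hop.abs_sub_sub_le_one hf hg layer fun _ _ => MC.abs_layer_sub_le_one_of_adj)
    (i := i) (j := j) (by simp [layer, hi, bottom]) (by simp [layer, hj, bottom])
  exact ⟨m, MC.dist_le_half_of_layer_eq (Fin.ext (by simpa [layer, sub_eq_zero] using hm))⟩
end

section
/- For any two lazy l-tracks f and g on the multilayered cycle MC_n^k, there exists a step i ∈ {1,...,l} such that |p₂(f(i)) − p₂(g(i))| ≤ 1, i.e. f(i) and g(i) are in the same or adjacent layers. -/
/-!
Let `d i` be the layer of `f i` minus the layer of `g i`. A lazy step changes each layer by at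
most one, so `d` changes by at most two per step. If `|d| ≥ 2` everywhere, `d` can therefore
never change sign. But `f` visits layer `0` at some time, where `d ≤ 0`, and so does `g`,
where `d ≥ 0`.
-/

theorem Fin.iff_of_forall_succ_iff {l : ℕ} (p : Fin l → Prop)
    (h : ∀ i : Fin l, ∀ hi : i.1 + 1 < l, p ⟨i.1 + 1, hi⟩ ↔ p i) (i j : Fin l) :
    p i ↔ p j := by
  suffices key : ∀ m (hm : m < l), p ⟨m, hm⟩ ↔ p ⟨0, by omega⟩ from
    (key i i.2).trans (key j j.2).symm
  intro m
  induction m with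
  | zero => intro _; rfl
  | succ m ih => intro hm; exact (h ⟨m, by omega⟩ hm).trans (ih _)

theorem MC.abs_layer_sub_le_one {n k : ℕ} {u v : ZMod n × Fin k}
    (h : v = u ∨ (MC n k).Adj u v) : |(v.2 : ℤ) - u.2| ≤ 1 := by
  rw [abs_le]
  rcases h with rfl | ⟨-, ⟨-, h⟩ | ⟨h, -⟩⟩
  · omega
  · omega
  · rw [h]; omega

theorem Int.pos_iff_pos_of_abs_sub_le_two {a b : ℤ} (hab : |b - a| ≤ 2)
    (ha : 1 < |a|) (hb : 1 < |b|) : 0 < b ↔ 0 < a := by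
  rw [abs_le] at hab
  rw [lt_abs] at ha hb
  omega

theorem stmt8_general (n k l : ℕ) (hk : 2 ≤ k)
    (f g : Fin l → ZMod n × Fin k)
    (hf : IsLazyTrack (MC n k) f) (hg : IsLazyTrack (MC n k) g) :
    ∃ i : Fin l, |(((f i).2.1 : ℤ) - ((g i).2.1 : ℤ))| ≤ 1 := by
  by_contra! hgap
  set d : Fin l → ℤ := fun i => (f i).2.1 - (g i).2.1 with hd
  replace hgap : ∀ i, 1 < |d i| := hgap
  have hsign : ∀ i j, 0 < d i ↔ 0 < d j := by
    refine Fin.iff_of_forall_succ_iff _ fun i hi => ?_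
    refine Int.pos_iff_pos_of_abs_sub_le_two ?_ (hgap i) (hgap _)
    have hfi := MC.abs_layer_sub_le_one (hf.2 i hi)
    have hgi := MC.abs_layer_sub_le_one (hg.2 i hi)
    rw [abs_le] at hfi hgi ⊢
    simp only [hd]
    omega
  obtain ⟨i, hi⟩ := hf.1 (0, ⟨0, by omega⟩)
  obtain ⟨j, hj⟩ := hg.1 (0, ⟨0, by omega⟩)
  have hdi : ¬ 0 < d i := by simp [hd, hi]
  have hdj : 0 < d j := by
    rcases lt_abs.mp (hgap j) with h | h
    · omega
    · simp only [hd, hj] at h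
      omega
  exact hdi ((hsign j i).mp hdj)

theorem stmt8 (n k l : ℕ) (hn : 3 ≤ n) (hk : 2 ≤ k)
    (f g : Fin l → ZMod n × Fin k)
    (hf : IsLazyTrack (MC n k) f) (hg : IsLazyTrack (MC n k) g) :
    ∃ i : Fin l, |(((f i).2.1 : ℤ) - ((g i).2.1 : ℤ))| ≤ 1 :=
  stmt8_general n k l hk f g hf hg
end
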